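/- arXiv:2111.06362 — 4 statements merged into one kernel-verified Lean document; each statement's English description precedes it below -/
import Mathlib

section
/- In a finite metric space, if a greedy procedure repeatedly selects a point p maximizing the weight of uncovered points within distance r and removes all uncovered points within distance γr of p (with γ ≥ 1), then any two distinct selected points are at distance strictly greater than (γ−1)·r from each other. -/
open scoped Classical

/-- One execution of the greedy clustering procedure on a finite metric space:
`GreedyExec r γ ω U L` holds when, starting from the set `U` of uncovered points,
the greedy procedure (repeatedly pick `p ∈ X` maximizing the `ω`-weight of the
uncovered points within distance `r` of `p`, then remove all uncovered points
within distance `γ * r` of `p` as the cluster of `p`) can produce the list `L`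
of (center, cluster) pairs. -/
inductive GreedyExec {X : Type*} [MetricSpace X] (r γ : ℝ) (ω : X → ℕ) :
    Finset X → List (X × Finset X) → Prop
  | nil : GreedyExec r γ ω ∅ []
  | cons (U : Finset X) (p : X) (L : List (X × Finset X))
      (hU : U.Nonempty)
      (hp : (U.filter fun y => dist y p ≤ r).Nonempty)
      (hmax : ∀ q : X, (U.filter fun y => dist y q ≤ r).Nonempty →
        ∑ y ∈ U.filter (fun y => dist y q ≤ r), ω y ≤
          ∑ y ∈ U.filter (fun y => dist y p ≤ r), ω y)
      (hrest : GreedyExec r γ ω (U \ U.filter fun y => dist y p ≤ γ * r) L) :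
      GreedyExec r γ ω U ((p, U.filter fun y => dist y p ≤ γ * r) :: L)

/-!
A center `q` chosen after `p` covers, within distance `r`, some point `y` that was still
uncovered when `p` was chosen, and `y` escaped the cluster of `p`, so `d(y, p) > γ r`.
The triangle inequality gives `d(p, q) ≥ d(y, p) - d(y, q) > γ r - r`.
-/

namespace GreedyExec

variable {X : Type*} [MetricSpace X] {r γ : ℝ} {ω : X → ℕ}

theorem exists_mem_dist_le_of_mem {U : Finset X} {L : List (X × Finset X)}
    (hexec : GreedyExec r γ ω U L) : ∀ q ∈ L.map Prod.fst, ∃ y ∈ U, dist y q ≤ r := by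
  induction hexec with
  | nil => simp
  | cons U p L _ hp _ _ ih =>
    intro q hq
    rcases List.mem_cons.mp hq with rfl | hq
    · obtain ⟨y, hy⟩ := hp
      exact ⟨y, (Finset.mem_filter.mp hy).1, (Finset.mem_filter.mp hy).2⟩
    · obtain ⟨y, hy, hyq⟩ := ih q hq
      exact ⟨y, Finset.sdiff_subset hy, hyq⟩

theorem pairwise_lt_dist {U : Finset X} {L : List (X × Finset X)}
    (hexec : GreedyExec r γ ω U L) :
    (L.map Prod.fst).Pairwise fun p q => (γ - 1) * r < dist p q := by
  induction hexec with
  | nil => simp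
  | cons U p L _ _ _ hrest ih =>
    refine List.pairwise_cons.mpr ⟨fun q hq => ?_, ih⟩
    obtain ⟨y, hy, hyq⟩ := hrest.exists_mem_dist_le_of_mem q hq
    have hyp : γ * r < dist y p := by
      simp only [Finset.mem_sdiff, Finset.mem_filter, not_and, not_le] at hy
      exact hy.2 hy.1
    calc (γ - 1) * r < dist y p - dist y q := by linarith
      _ ≤ dist p q := by linarith [dist_triangle_right y p q]

end GreedyExec

theorem greedy_centers_separated_general {X : Type*} [MetricSpace X] {r γ : ℝ}
    (ω : X → ℕ) (Y : Finset X)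
    (L : List (X × Finset X)) (hexec : GreedyExec r γ ω Y L) :
    ∀ p ∈ L.map Prod.fst, ∀ q ∈ L.map Prod.fst, p ≠ q → (γ - 1) * r < dist p q := by
  have : Std.Symm fun p q : X => (γ - 1) * r < dist p q :=
    ⟨fun p q h => dist_comm p q ▸ h⟩
  exact hexec.pairwise_lt_dist.forall

/-- Any two distinct centers selected by the greedy clustering procedure are at
distance strictly greater than `(γ - 1) * r` from each other. -/
theorem greedy_centers_separated {X : Type*} [MetricSpace X] {r γ : ℝ}
    (hr : 0 ≤ r) (hγ : 1 ≤ γ) (ω : X → ℕ) (Y : Finset X)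
    (L : List (X × Finset X)) (hexec : GreedyExec r γ ω Y L) :
    ∀ p ∈ L.map Prod.fst, ∀ q ∈ L.map Prod.fst, p ≠ q → (γ - 1) * r < dist p q :=
  greedy_centers_separated_general ω Y L hexec
end

section
/- (Charikar et al. greedy domination lemma) Suppose greedy clustering is run with expansion parameter γ ≥ 3. For any collection B of k ≥ 1 balls of radius r centered at points of X, the total weight of the first k' = min{k, |M|} greedy clusters is at least the total ω-weight of the points of Y covered by the balls in B. -/
open scoped Classical

/-!
Induction along the run. Let `p` be the first greedy center, with cluster `C = U ∩ B(p, γr)`.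
It suffices to find `c ∈ Cs` such that the covered part of `C` and the part of `B(c, r)` outside `C`
together weigh at most `ω(C)`: the other `|Cs| - 1` balls cover the rest of `U \ C`, which the
induction hypothesis handles. If some ball lies entirely inside `C`, take it. Otherwise no ball
meets `B(p, r)`, since such a ball lies in `B(p, 3r) ⊆ B(p, γr)`; so the covered part of `C`
avoids `B(p, r)`, and any ball weighs at most `ω(U ∩ B(p, r))` by the greedy choice.
-/

open Finset

theorem Finset.sum_union_le {ι M : Type*} [AddCommMonoid M] [PartialOrder M]
    [CanonicallyOrderedAdd M] (s t : Finset ι) (f : ι → M) :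
    ∑ i ∈ s ∪ t, f i ≤ ∑ i ∈ s, f i + ∑ i ∈ t, f i := by
  rw [← sum_union_inter]
  exact le_self_add

namespace GreedyClustering

variable {X : Type*} [MetricSpace X]

noncomputable def ballIn (s : Finset X) (c : X) (r : ℝ) : Finset X :=
  s.filter fun y => dist y c ≤ r

noncomputable def coveredIn (s Cs : Finset X) (r : ℝ) : Finset X :=
  s.filter fun y => ∃ c ∈ Cs, dist y c ≤ r

theorem ballIn_mono {s t : Finset X} (hst : s ⊆ t) (c : X) (r : ℝ) :
    ballIn s c r ⊆ ballIn t c r :=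
  filter_subset_filter _ hst

theorem ballIn_subset_ballIn_mul {γ : ℝ} (hγ : 1 ≤ γ) (s : Finset X) (c : X) (r : ℝ) :
    ballIn s c r ⊆ ballIn s c (γ * r) := by
  intro y hy
  simp only [ballIn, mem_filter] at hy ⊢
  have hr : 0 ≤ r := dist_nonneg.trans hy.2
  exact ⟨hy.1, hy.2.trans (le_mul_of_one_le_left hr hγ)⟩

theorem forall_sum_ballIn_le_of_nonempty {r : ℝ} {ω : X → ℕ} {U : Finset X} {p : X}
    (hmax : ∀ q : X, (ballIn U q r).Nonempty →
      ∑ y ∈ ballIn U q r, ω y ≤ ∑ y ∈ ballIn U p r, ω y) (q : X) :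
    ∑ y ∈ ballIn U q r, ω y ≤ ∑ y ∈ ballIn U p r, ω y := by
  rcases (ballIn U q r).eq_empty_or_nonempty with hq | hq
  · simp [hq]
  · exact hmax q hq

theorem coveredIn_sdiff (s t Cs : Finset X) (r : ℝ) :
    coveredIn s Cs r \ t = coveredIn (s \ t) Cs r := by
  ext y
  simp only [coveredIn, mem_sdiff, mem_filter]
  tauto

theorem sum_coveredIn_le_sum_ballIn_add {M : Type*} [AddCommMonoid M] [PartialOrder M]
    [CanonicallyOrderedAdd M] (ω : X → M) (s Cs : Finset X) (c : X) (r : ℝ) :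
    ∑ y ∈ coveredIn s Cs r, ω y ≤
      ∑ y ∈ ballIn s c r, ω y + ∑ y ∈ coveredIn s (Cs.erase c) r, ω y := by
  have hsub : coveredIn s Cs r ⊆ ballIn s c r ∪ coveredIn s (Cs.erase c) r := by
    intro y hy
    simp only [coveredIn, ballIn, mem_union, mem_filter, mem_erase] at hy ⊢
    obtain ⟨hys, c', hc', hyc'⟩ := hy
    by_cases hcc' : c' = c
    · exact Or.inl ⟨hys, hcc' ▸ hyc'⟩
    · exact Or.inr ⟨hys, c', ⟨hcc', hc'⟩, hyc'⟩
  exact (sum_le_sum_of_subset hsub).trans (sum_union_le _ _ _)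

theorem dist_le_three_mul {x y z w : X} {r : ℝ} (hxy : dist x y ≤ r) (hzy : dist z y ≤ r)
    (hzw : dist z w ≤ r) : dist x w ≤ 3 * r := by
  calc dist x w ≤ dist x y + dist y z + dist z w := dist_triangle4 x y z w
    _ ≤ 3 * r := by rw [dist_comm y z]; linarith

theorem exists_mem_sum_inter_add_sum_ballIn_sdiff_le {r γ : ℝ} (hγ : 3 ≤ γ) (ω : X → ℕ)
    (U : Finset X) (p : X) (hmax : ∀ q, ∑ y ∈ ballIn U q r, ω y ≤ ∑ y ∈ ballIn U p r, ω y)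
    {Cs : Finset X} (hCs : Cs.Nonempty) :
    ∃ c ∈ Cs, ∑ y ∈ coveredIn U Cs r ∩ ballIn U p (γ * r), ω y +
        ∑ y ∈ ballIn (U \ ballIn U p (γ * r)) c r, ω y ≤ ∑ y ∈ ballIn U p (γ * r), ω y := by
  set C := ballIn U p (γ * r)
  by_cases hinside : ∃ c ∈ Cs, ballIn U c r ⊆ C
  · obtain ⟨c, hc, hcC⟩ := hinside
    have hempty : ballIn (U \ C) c r = ∅ := by
      refine eq_empty_of_forall_notMem fun y hy => ?_
      simp only [ballIn, mem_filter, mem_sdiff] at hy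
      exact hy.1.2 (hcC (mem_filter.2 ⟨hy.1.1, hy.2⟩))
    refine ⟨c, hc, ?_⟩
    rw [hempty, sum_empty, add_zero]
    exact sum_le_sum_of_subset inter_subset_right
  · push Not at hinside
    obtain ⟨c₀, hc₀⟩ := hCs
    have hdisj : Disjoint (coveredIn U Cs r ∩ C) (ballIn U p r) := by
      refine disjoint_left.2 fun y hy hyp => ?_
      simp only [coveredIn, ballIn, mem_inter, mem_filter] at hy hyp
      obtain ⟨⟨-, c, hc, hyc⟩, -⟩ := hy
      refine hinside c hc fun z hz => ?_
      simp only [C, ballIn, mem_filter] at hz ⊢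
      have hr : 0 ≤ r := dist_nonneg.trans hyc
      exact ⟨hz.1, (dist_le_three_mul hz.2 hyc hyp.2).trans (mul_le_mul_of_nonneg_right hγ hr)⟩
    refine ⟨c₀, hc₀, ?_⟩
    calc ∑ y ∈ coveredIn U Cs r ∩ C, ω y + ∑ y ∈ ballIn (U \ C) c₀ r, ω y
        ≤ ∑ y ∈ coveredIn U Cs r ∩ C, ω y + ∑ y ∈ ballIn U p r, ω y := by
          gcongr ∑ y ∈ coveredIn U Cs r ∩ C, ω y + ?_
          exact (sum_le_sum_of_subset (ballIn_mono sdiff_subset c₀ r)).trans (hmax c₀)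
      _ = ∑ y ∈ coveredIn U Cs r ∩ C ∪ ballIn U p r, ω y := (sum_union hdisj).symm
      _ ≤ ∑ y ∈ C, ω y := sum_le_sum_of_subset
          (union_subset inter_subset_right (ballIn_subset_ballIn_mul (by linarith) U p r))

end GreedyClustering

open GreedyClustering in
theorem GreedyExec.sum_coveredIn_le {X : Type*} [MetricSpace X] {r γ : ℝ} (hγ : 3 ≤ γ)
    {ω : X → ℕ} {Y : Finset X} {L : List (X × Finset X)} (hexec : GreedyExec r γ ω Y L)
    (Cs : Finset X) :
    ∑ y ∈ coveredIn Y Cs r, ω y ≤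
      ((L.take (min Cs.card L.length)).map fun pc => ∑ y ∈ pc.2, ω y).sum := by
  induction hexec generalizing Cs with
  | nil => simp [coveredIn]
  | cons U p L _ _ hmax _ ih =>
    rcases Cs.eq_empty_or_nonempty with rfl | hCs
    · simp [coveredIn]
    obtain ⟨c, hc, hcharge⟩ := exists_mem_sum_inter_add_sum_ballIn_sdiff_le hγ ω U p
      (forall_sum_ballIn_le_of_nonempty hmax) hCs
    set C := ballIn U p (γ * r)
    rw [← card_erase_add_one hc, List.length_cons, Nat.add_min_add_right, List.take_succ_cons,
      List.map_cons, List.sum_cons]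
    calc ∑ y ∈ coveredIn U Cs r, ω y
        = ∑ y ∈ coveredIn U Cs r ∩ C, ω y + ∑ y ∈ coveredIn (U \ C) Cs r, ω y := by
          rw [← coveredIn_sdiff, sum_inter_add_sum_sdiff]
      _ ≤ ∑ y ∈ coveredIn U Cs r ∩ C, ω y + (∑ y ∈ ballIn (U \ C) c r, ω y +
            ∑ y ∈ coveredIn (U \ C) (Cs.erase c) r, ω y) := by
          gcongr ∑ y ∈ coveredIn U Cs r ∩ C, ω y + ?_
          exact sum_coveredIn_le_sum_ballIn_add ω _ _ c r
      _ ≤ ∑ y ∈ C, ω y + ∑ y ∈ coveredIn (U \ C) (Cs.erase c) r, ω y := by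
          rw [← add_assoc]
          exact add_le_add hcharge le_rfl
      _ ≤ _ := add_le_add le_rfl (ih _)

theorem greedy_domination_general {X : Type*} [MetricSpace X] {r γ : ℝ}
    (hγ : 3 ≤ γ) (ω : X → ℕ) (Y : Finset X)
    (L : List (X × Finset X)) (hexec : GreedyExec r γ ω Y L)
    (Cs : Finset X) :
    ∑ y ∈ Y.filter (fun y => ∃ c ∈ Cs, dist y c ≤ r), ω y ≤
      ((L.take (min Cs.card L.length)).map fun pc => ∑ y ∈ pc.2, ω y).sum :=
  hexec.sum_coveredIn_le hγ Cs

/-- (Charikar et al. greedy domination lemma.) If greedy clustering is run with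
expansion parameter `γ ≥ 3`, then for any collection of `k ≥ 1` balls of radius
`r` with centers `Cs ⊆ X`, the total weight of the first `min k |M|` greedy
clusters is at least the total `ω`-weight of the points of `Y` covered by the
balls. -/
theorem greedy_domination {X : Type*} [MetricSpace X] {r γ : ℝ}
    (hr : 0 ≤ r) (hγ : 3 ≤ γ) (ω : X → ℕ) (Y : Finset X)
    (L : List (X × Finset X)) (hexec : GreedyExec r γ ω Y L)
    (Cs : Finset X) (hCs : 1 ≤ Cs.card) :
    ∑ y ∈ Y.filter (fun y => ∃ c ∈ Cs, dist y c ≤ r), ω y ≤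
      ((L.take (min Cs.card L.length)).map fun pc => ∑ y ∈ pc.2, ω y).sum :=
  greedy_domination_general hγ ω Y L hexec Cs
end

section
/- (Net-based reduction from (t+1)-NUkC to robust t-NUkC, easy direction) Let Y be a 2r-net of a finite metric space X: pairwise distances in Y exceed 2r, and every point of X is within 2r of some point of Y. Suppose X is covered by a collection of balls B₁,…,B_s of radii ρ₁,…,ρ_s together with k balls of radius r. Then at most k points of Y are uncovered by the enlarged balls B(φ(c_i), ρ_i + 2r) (where c_i is the center of B_i and φ maps each point to its nearest net point), i.e., the enlarged balls cover at least |Y| − k points of Y. -/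
/-!
A net point missed by every enlarged ball `B(φ (c i), ρ i + 2r)` is, by the triangle inequality
through `c i`, missed by every `B(c i, ρ i)`, so it lies in one of the `r`-balls around `K`.
An `r`-ball contains at most one point of a `2r`-separated set, so these net points inject into `K`.
-/

theorem Finset.card_le_card_of_forall_exists_dist_le {X : Type*} [PseudoMetricSpace X] {r : ℝ}
    {S K : Finset X} (hsep : (S : Set X).Pairwise fun u v => 2 * r < dist u v)
    (hnear : ∀ y ∈ S, ∃ p ∈ K, dist y p ≤ r) : S.card ≤ K.card := by
  choose! f hfK hf using hnear
  refine Finset.card_le_card_of_injOn f hfK fun u hu v hv huv => ?_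
  by_contra hne
  have hclose : dist u v ≤ 2 * r := by
    calc dist u v ≤ dist u (f u) + dist v (f u) := dist_triangle_right u v (f u)
      _ ≤ r + r := add_le_add (hf u hu) (huv ▸ hf v hv)
      _ = 2 * r := by ring
  exact (hsep hu hv hne).not_ge hclose

theorem net_reduction_easy_general {X : Type*} [MetricSpace X] {r : ℝ}
    (Y : Finset X)
    (hsep : ∀ u ∈ Y, ∀ v ∈ Y, u ≠ v → 2 * r < dist u v)
    (φ : X → X) (hφ : ∀ x : X, dist x (φ x) ≤ 2 * r)
    {ι : Type*} [Fintype ι] (c : ι → X) (ρ : ι → ℝ) (K : Finset X)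
    (hcov : ∀ x : X, (∃ i : ι, dist x (c i) ≤ ρ i) ∨ ∃ p ∈ K, dist x p ≤ r) :
    (Y.filter fun y => ¬ ∃ i : ι, dist y (φ (c i)) ≤ ρ i + 2 * r).card ≤
      K.card := by
  refine Finset.card_le_card_of_forall_exists_dist_le (r := r) ?_ fun y hy => ?_
  · intro u hu v hv hne
    exact hsep u (Finset.mem_filter.1 hu).1 v (Finset.mem_filter.1 hv).1 hne
  · refine (hcov y).resolve_left fun ⟨i, hi⟩ => (Finset.mem_filter.1 hy).2 ⟨i, ?_⟩
    calc dist y (φ (c i)) ≤ dist y (c i) + dist (c i) (φ (c i)) := dist_triangle _ _ _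
      _ ≤ ρ i + 2 * r := add_le_add hi (hφ (c i))

/-- (Net-based reduction, easy direction.)  Let `Y` be a `2r`-net of `X` with
nearest-net-point map `φ`.  If `X` is covered by balls `B(c i, ρ i)` (for `i`
in a finite index set) together with balls of radius `r` centered at the points
of `K`, then the enlarged balls `B(φ (c i), ρ i + 2r)` cover all but at most
`|K|` points of `Y`. -/
theorem net_reduction_easy {X : Type*} [MetricSpace X] {r : ℝ} (hr : 0 ≤ r)
    (Y : Finset X)
    (hsep : ∀ u ∈ Y, ∀ v ∈ Y, u ≠ v → 2 * r < dist u v)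
    (hnet : ∀ x : X, ∃ y ∈ Y, dist x y ≤ 2 * r)
    (φ : X → X) (hφY : ∀ x : X, φ x ∈ Y) (hφ : ∀ x : X, dist x (φ x) ≤ 2 * r)
    {ι : Type*} [Fintype ι] (c : ι → X) (ρ : ι → ℝ) (K : Finset X)
    (hcov : ∀ x : X, (∃ i : ι, dist x (c i) ≤ ρ i) ∨ ∃ p ∈ K, dist x p ≤ r) :
    (Y.filter fun y => ¬ ∃ i : ι, dist y (φ (c i)) ≤ ρ i + 2 * r).card ≤
      K.card :=
  net_reduction_easy_general Y hsep φ hφ c ρ K hcov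
end

section
/- (Interleaved subsequence greedy equivalence) Let the greedy clustering algorithm on input (X, X, r, 3, ω) produce ordered centers p₁, p₂, … with clusters C(p_i). Let M₂ ⊆ M be a subset of centers, X₂ = ∪_{p∈M₂} C(p). Then running the greedy clustering algorithm on input (X₂, X, r, 3, ω) produces exactly the centers of M₂ in their original relative order, with the same clusters C(p) and weights wt(p). -/
/-!
Only the `r`-ball around a chosen center `p` enters the greedy choice, and it lies inside the
cluster `C(p)` since `γ ≥ 1`. Keeping all of `C(p)` in `X₂` therefore preserves every weight that
made `p` win, while every competitor's weight can only drop, so `p` is still the first choice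
and carves out the same cluster; the remaining uncovered set is the union of the later kept
clusters, and induction on the execution finishes.
-/

open scoped Classical

inductive GreedyExecTB {X : Type*} [MetricSpace X] [LinearOrder X]
    (r γ : ℝ) (ω : X → ℕ) : Finset X → List (X × Finset X) → Prop
  | nil : GreedyExecTB r γ ω ∅ []
  | cons (U : Finset X) (p : X) (L : List (X × Finset X))
      (hU : U.Nonempty)
      (hp : (U.filter fun y => dist y p ≤ r).Nonempty)
      (hmax : ∀ q : X, (U.filter fun y => dist y q ≤ r).Nonempty →
        ∑ y ∈ U.filter (fun y => dist y q ≤ r), ω y ≤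
          ∑ y ∈ U.filter (fun y => dist y p ≤ r), ω y)
      (htb : ∀ q : X, (U.filter fun y => dist y q ≤ r).Nonempty →
        ∑ y ∈ U.filter (fun y => dist y q ≤ r), ω y =
          ∑ y ∈ U.filter (fun y => dist y p ≤ r), ω y → p ≤ q)
      (hrest : GreedyExecTB r γ ω (U \ U.filter fun y => dist y p ≤ γ * r) L) :
      GreedyExecTB r γ ω U ((p, U.filter fun y => dist y p ≤ γ * r) :: L)

section GreedyCenter

variable {X : Type*} [Dist X] [LE X]

def IsGreedyCenter (r : ℝ) (ω : X → ℕ) (U : Finset X) (p : X) : Prop :=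
  (U.filter fun y => dist y p ≤ r).Nonempty ∧
  (∀ q : X, (U.filter fun y => dist y q ≤ r).Nonempty →
    ∑ y ∈ U.filter (fun y => dist y q ≤ r), ω y ≤
      ∑ y ∈ U.filter (fun y => dist y p ≤ r), ω y) ∧
  (∀ q : X, (U.filter fun y => dist y q ≤ r).Nonempty →
    ∑ y ∈ U.filter (fun y => dist y q ≤ r), ω y =
      ∑ y ∈ U.filter (fun y => dist y p ≤ r), ω y → p ≤ q)

theorem IsGreedyCenter.mono {r : ℝ} {ω : X → ℕ} {U V : Finset X} {p : X}
    (hp : IsGreedyCenter r ω U p) (hVU : V ⊆ U)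
    (hball : (U.filter fun y => dist y p ≤ r) ⊆ V) : IsGreedyCenter r ω V p := by
  obtain ⟨hne, hmax, htb⟩ := hp
  have hball_eq : (V.filter fun y => dist y p ≤ r) = U.filter fun y => dist y p ≤ r :=
    (Finset.filter_subset_filter _ hVU).antisymm fun y hy =>
      Finset.mem_filter.2 ⟨hball hy, (Finset.mem_filter.1 hy).2⟩
  have hsub (q : X) : (V.filter fun y => dist y q ≤ r) ⊆ U.filter fun y => dist y q ≤ r :=
    Finset.filter_subset_filter _ hVU
  have hsum_le (q : X) : ∑ y ∈ V.filter (fun y => dist y q ≤ r), ω y ≤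
      ∑ y ∈ U.filter (fun y => dist y q ≤ r), ω y :=
    Finset.sum_le_sum_of_subset (hsub q)
  refine ⟨hball_eq ▸ hne, fun q hq => ?_, fun q hq heq => ?_⟩
  · rw [hball_eq]
    exact (hsum_le q).trans (hmax q (hq.mono (hsub q)))
  · rw [hball_eq] at heq
    exact htb q (hq.mono (hsub q)) ((hmax q (hq.mono (hsub q))).antisymm (heq ▸ hsum_le q))

end GreedyCenter

namespace GreedyExecTB

variable {X : Type*} [MetricSpace X] [LinearOrder X] {r γ : ℝ} {ω : X → ℕ}

theorem cons_of_isGreedyCenter {U : Finset X} {p : X} {L : List (X × Finset X)}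
    (hp : IsGreedyCenter r ω U p)
    (hrest : GreedyExecTB r γ ω (U \ U.filter fun y => dist y p ≤ γ * r) L) :
    GreedyExecTB r γ ω U ((p, U.filter fun y => dist y p ≤ γ * r) :: L) :=
  cons U p L (hp.1.mono (Finset.filter_subset _ _)) hp.1 hp.2.1 hp.2.2 hrest

theorem foldr_union_filter_subset {U : Finset X} {L : List (X × Finset X)}
    (hexec : GreedyExecTB r γ ω U L) (S : Finset X) :
    ((L.filter fun pc => pc.1 ∈ S).map Prod.snd).foldr (· ∪ ·) ∅ ⊆ U := by
  induction hexec with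
  | nil => simp
  | cons U p L _ _ _ _ _ ih =>
    by_cases hpS : p ∈ S
    · simpa [List.filter_cons, hpS] using
        Finset.union_subset (Finset.filter_subset _ _) (ih.trans Finset.sdiff_subset)
    · simpa [List.filter_cons, hpS] using ih.trans Finset.sdiff_subset

theorem cons_union {U W : Finset X} {p : X} {L : List (X × Finset X)} (hγ : 1 ≤ γ)
    (hp : IsGreedyCenter r ω U p)
    (hW : W ⊆ U \ U.filter fun y => dist y p ≤ γ * r) (hexec : GreedyExecTB r γ ω W L) :
    GreedyExecTB r γ ω ((U.filter fun y => dist y p ≤ γ * r) ∪ W)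
      ((p, U.filter fun y => dist y p ≤ γ * r) :: L) := by
  set C := U.filter fun y => dist y p ≤ γ * r
  have hCU : C ⊆ U := Finset.filter_subset _ _
  have hVU : C ∪ W ⊆ U := Finset.union_subset hCU (hW.trans Finset.sdiff_subset)
  have hcluster : ((C ∪ W).filter fun y => dist y p ≤ γ * r) = C :=
    (Finset.filter_subset_filter _ hVU).antisymm fun y hy =>
      Finset.mem_filter.2 ⟨Finset.mem_union_left _ hy, (Finset.mem_filter.1 hy).2⟩
  have hball : (U.filter fun y => dist y p ≤ r) ⊆ C ∪ W := by
    refine Finset.subset_union_left.trans' (Finset.monotone_filter_right _ fun y _ hy => ?_)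
    have hr : 0 ≤ r := dist_nonneg.trans hy
    exact hy.trans (le_mul_of_one_le_left hr hγ)
  have hrest : (C ∪ W) \ C = W :=
    Finset.union_sdiff_cancel_left (Finset.sdiff_disjoint.symm.mono_right hW)
  have hstep := cons_of_isGreedyCenter (γ := γ) (L := L) (hp.mono hVU hball)
    (by rwa [hcluster, hrest])
  rwa [hcluster] at hstep

theorem filter_centers {U : Finset X} {L : List (X × Finset X)} (hγ : 1 ≤ γ)
    (hexec : GreedyExecTB r γ ω U L) (S : Finset X) :
    GreedyExecTB r γ ω (((L.filter fun pc => pc.1 ∈ S).map Prod.snd).foldr (· ∪ ·) ∅)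
      (L.filter fun pc => pc.1 ∈ S) := by
  induction hexec with
  | nil => simpa using nil
  | cons U p L _ hp hmax htb hrest ih =>
    by_cases hpS : p ∈ S
    · simpa [List.filter_cons, hpS] using
        cons_union hγ ⟨hp, hmax, htb⟩ (hrest.foldr_union_filter_subset S) ih
    · simpa [List.filter_cons, hpS] using ih

end GreedyExecTB

theorem greedy_subsequence_equivalence_general {X : Type*} [MetricSpace X]
    [LinearOrder X] [Fintype X] {r : ℝ} (ω : X → ℕ)
    (L : List (X × Finset X))
    (hexec : GreedyExecTB r 3 ω Finset.univ L) (S : Finset X) :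
    GreedyExecTB r 3 ω
      (((L.filter fun pc => pc.1 ∈ S).map Prod.snd).foldr (· ∪ ·) ∅)
      (L.filter fun pc => pc.1 ∈ S) :=
  hexec.filter_centers (by norm_num) S

/-- (Interleaved subsequence greedy equivalence.)  Let the greedy clustering
algorithm with consistent tie-breaking, run on input `(X, X, r, 3, ω)`, produce
the ordered list `L` of (center, cluster) pairs.  For any subset `S` of centers
(defining `M₂ = {centers of L} ∩ S` and `X₂ = ∪_{p ∈ M₂} C p`), running the
same greedy algorithm on input `(X₂, X, r, 3, ω)` produces exactly the centers
of `M₂` in their original relative order, with the same clusters and hence the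
same weights. -/
theorem greedy_subsequence_equivalence {X : Type*} [MetricSpace X]
    [LinearOrder X] [Fintype X] {r : ℝ} (hr : 0 ≤ r) (ω : X → ℕ)
    (L : List (X × Finset X))
    (hexec : GreedyExecTB r 3 ω Finset.univ L) (S : Finset X) :
    GreedyExecTB r 3 ω
      (((L.filter fun pc => pc.1 ∈ S).map Prod.snd).foldr (· ∪ ·) ∅)
      (L.filter fun pc => pc.1 ∈ S) :=
  greedy_subsequence_equivalence_general ω L hexec S
end
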